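/- Let f ∈ ℕ[x^{±1}] with |supp(f)| ≥ 3 and f(1) ∈ {11, 17, 23, 27}. Then f can be written as the sum of two irreducible elements of ℕ[x^{±1}]. -/

import Mathlib

/-- The semiring of Laurent polynomials with nonnegative integer coefficients, ℕ[x^{±1}]. -/
abbrev NL : Type := AddMonoidAlgebra ℕ ℤ

/-- The monomial `c • x^k` in ℕ[x^{±1}]. -/
noncomputable def mono (k : ℤ) (c : ℕ) : NL := AddMonoidAlgebra.single k c

/-- Evaluation at 1, i.e. the sum of the coefficients. -/
def evalOne (f : NL) : ℕ := f.coeff.sum fun _ c => c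

/-- A monomial is `c x^k` with `c ≥ 1`. -/
def IsMonomial (f : NL) : Prop := ∃ (c : ℕ) (k : ℤ), 0 < c ∧ f = mono k c

/-- A nonzero `f` is monolithic if any factorization has a monomial factor. -/
def Monolithic (f : NL) : Prop :=
  f ≠ 0 ∧ ∀ g h : NL, f = g * h → IsMonomial g ∨ IsMonomial h

/-- `f` is hyper-monolithic: it has ≥ 2 terms, written with positive coefficients and
strictly decreasing exponents `k 0 > ⋯ > k n`, and either the first gap is strictly
smaller than every later gap, or the last gap is strictly smaller than every earlier gap. -/
def HyperMonolithic (f : NL) : Prop :=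
  ∃ (n : ℕ) (k : ℕ → ℤ) (c : ℕ → ℕ),
    1 ≤ n ∧ (∀ i j, i < j → j ≤ n → k j < k i) ∧ (∀ i, i ≤ n → 0 < c i) ∧
    f = ∑ i ∈ Finset.range (n + 1), mono (k i) (c i) ∧
    ((∀ i, 1 ≤ i → i + 1 ≤ n → k 0 - k 1 < k i - k (i + 1)) ∨
     (∀ j, j + 2 ≤ n → k (n - 1) - k n < k j - k (j + 1)))


/-!
Evaluation at `1` is a local homomorphism `ℕ[x^{±1}] → ℕ`, so an element whose value at `1` is
prime is irreducible. Since `f(1) - 4 ∈ {7, 13, 19, 23}` is prime, it suffices to find an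
irreducible `g = x^{p₁} + x^{p₂} + x^{p₃} + x^{p₄} ≤ f` (coefficientwise). Writing elements as
multisets of exponents, a factorization of `g` into non-units is `(x^{a₀} + x^{a₁})(x^{b₀} + x^{b₁})`,
which forces `p₁ + p₄ = p₂ + p₃` when `p₁ ≥ p₂ ≥ p₃ ≥ p₄`. A suitable `g` exists: `3x^p + x^q` if
some coefficient of `f` is at least `3`, and otherwise `f` has at least five exponents, among
which four with `p₁ + p₄ ≠ p₂ + p₃` can be chosen.
-/

open AddMonoidAlgebra

noncomputable def evalOneHom : NL →ₐ[ℕ] ℕ := lift ℕ ℕ ℤ 1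

lemma evalOneHom_apply (f : NL) : evalOneHom f = evalOne f := by
  simp [evalOneHom, lift_apply, evalOne]

lemma evalOne_mul (u v : NL) : evalOne (u * v) = evalOne u * evalOne v := by
  simp only [← evalOneHom_apply, map_mul]

/-- The element `∑_{a ∈ m} x^a`; every element of ℕ[x^{±1}] is uniquely of this form. -/
noncomputable def ofMultiset : Multiset ℤ ≃+ NL :=
  Multiset.toFinsupp.trans coeffAddEquiv.symm

lemma coeff_ofMultiset (m : Multiset ℤ) : (ofMultiset m).coeff = Multiset.toFinsupp m := rfl

lemma ofMultiset_singleton (a : ℤ) : ofMultiset {a} = single a 1 :=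
  coeff_injective (Multiset.toFinsupp_singleton a)

lemma ofMultiset_cons (a : ℤ) (m : Multiset ℤ) :
    ofMultiset (a ::ₘ m) = single a 1 + ofMultiset m := by
  rw [← Multiset.singleton_add, map_add, ofMultiset_singleton]

lemma evalOne_ofMultiset (m : Multiset ℤ) : evalOne (ofMultiset m) = Multiset.card m := by
  induction m using Multiset.induction_on with
  | empty => simp [evalOne]
  | cons a m ih =>
    rw [← evalOneHom_apply] at ih ⊢
    rw [ofMultiset_cons, map_add, ih, evalOneHom, lift_single, Multiset.card_cons]
    simp [add_comm]

lemma single_one_mul_ofMultiset (a : ℤ) (t : Multiset ℤ) :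
    single a 1 * ofMultiset t = ofMultiset (t.map (a + ·)) := by
  induction t using Multiset.induction_on with
  | empty => simp only [map_zero, mul_zero, Multiset.map_zero]
  | cons b t ih =>
    rw [ofMultiset_cons, mul_add, ih, single_mul_single, mul_one, Multiset.map_cons,
      ofMultiset_cons]

lemma ofMultiset_mul (s t : Multiset ℤ) :
    ofMultiset s * ofMultiset t = ofMultiset (s.bind fun a => t.map (a + ·)) := by
  induction s using Multiset.induction_on with
  | empty => simp only [map_zero, zero_mul, Multiset.zero_bind]
  | cons a s ih =>
    rw [ofMultiset_cons, add_mul, ih, single_one_mul_ofMultiset, Multiset.cons_bind, map_add]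

lemma ofMultiset_pair_mul_pair (a₀ a₁ b₀ b₁ : ℤ) :
    ofMultiset {a₀, a₁} * ofMultiset {b₀, b₁} =
      ofMultiset {a₀ + b₀, a₀ + b₁, a₁ + b₀, a₁ + b₁} := by
  rw [ofMultiset_mul]
  rfl

lemma isUnit_iff_evalOne_eq_one {u : NL} : IsUnit u ↔ evalOne u = 1 := by
  constructor
  · intro hu
    simpa [evalOneHom_apply] using hu.map evalOneHom
  · intro hu
    obtain ⟨m, rfl⟩ := ofMultiset.surjective u
    obtain ⟨a, rfl⟩ := Multiset.card_eq_one.mp (by rwa [evalOne_ofMultiset] at hu)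
    refine .of_mul_eq_one (single (-a) 1) ?_
    rw [ofMultiset_singleton, single_mul_single, add_neg_cancel, mul_one, one_def]

instance : IsLocalHom evalOneHom :=
  ⟨fun u hu => isUnit_iff_evalOne_eq_one.mpr (by simpa [evalOneHom_apply] using hu)⟩

lemma irreducible_of_prime_evalOne {u : NL} (hu : (evalOne u).Prime) : Irreducible u :=
  Irreducible.of_map (f := evalOneHom) (by rwa [evalOneHom_apply])

lemma irreducible_ofMultiset_of_card_eq_four {m : Multiset ℤ} (hm : Multiset.card m = 4)
    (hsumset : ∀ a₀ a₁ b₀ b₁ : ℤ, m ≠ {a₀ + b₀, a₀ + b₁, a₁ + b₀, a₁ + b₁}) :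
    Irreducible (ofMultiset m) := by
  refine ⟨by rw [isUnit_iff_evalOne_eq_one, evalOne_ofMultiset, hm]; decide, ?_⟩
  intro u v huv
  obtain ⟨s, rfl⟩ := ofMultiset.surjective u
  obtain ⟨t, rfl⟩ := ofMultiset.surjective v
  simp only [isUnit_iff_evalOne_eq_one, evalOne_ofMultiset]
  have hcard : Multiset.card s * Multiset.card t = 4 := by
    rw [← hm, ← evalOne_ofMultiset, ← evalOne_ofMultiset, ← evalOne_ofMultiset, ← evalOne_mul,
      huv]
  have hs : Multiset.card s ≤ 4 := Nat.le_of_dvd (by norm_num) ⟨_, hcard.symm⟩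
  interval_cases hcs : Multiset.card s <;> try omega
  obtain ⟨a₀, a₁, rfl⟩ := Multiset.card_eq_two.mp hcs
  obtain ⟨b₀, b₁, rfl⟩ := Multiset.card_eq_two.mp (by omega : Multiset.card t = 2)
  rw [ofMultiset_pair_mul_pair] at huv
  exact absurd (ofMultiset.injective huv) (hsumset a₀ a₁ b₀ b₁)

/-- In a sumset `{a₀, a₁} + {b₀, b₁}` the largest and smallest elements add up to
half the total, hence to the sum of the two middle ones. -/
lemma quadruple_ne_pairSumset {p₁ p₂ p₃ p₄ : ℤ} (h₁₂ : p₂ ≤ p₁) (h₂₃ : p₃ ≤ p₂) (h₃₄ : p₄ ≤ p₃)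
    (hne : p₁ + p₄ ≠ p₂ + p₃) (a₀ a₁ b₀ b₁ : ℤ) :
    ({p₁, p₂, p₃, p₄} : Multiset ℤ) ≠ {a₀ + b₀, a₀ + b₁, a₁ + b₀, a₁ + b₁} := by
  intro h
  have hmem : ∀ x, x ∈ ({p₁, p₂, p₃, p₄} : Multiset ℤ) ↔
      x ∈ ({a₀ + b₀, a₀ + b₁, a₁ + b₀, a₁ + b₁} : Multiset ℤ) := fun x => by rw [h]
  have hsum := congrArg Multiset.sum h
  simp only [Multiset.insert_eq_cons, Multiset.mem_cons, Multiset.mem_singleton,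
    Multiset.sum_cons, Multiset.sum_singleton] at hmem hsum
  have hbound : ∀ x, x = a₀ + b₀ ∨ x = a₀ + b₁ ∨ x = a₁ + b₀ ∨ x = a₁ + b₁ → p₄ ≤ x ∧ x ≤ p₁ :=
    fun x hx => by have := (hmem x).mpr hx; omega
  have h00 := hbound _ (Or.inl rfl)
  have h01 := hbound _ (Or.inr (Or.inl rfl))
  have h10 := hbound _ (Or.inr (Or.inr (Or.inl rfl)))
  have h11 := hbound _ (Or.inr (Or.inr (Or.inr rfl)))
  have hp₁ := (hmem p₁).mp (Or.inl rfl)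
  have hp₄ := (hmem p₄).mp (Or.inr (Or.inr (Or.inr rfl)))
  omega

lemma irreducible_ofMultiset_quadruple {p₁ p₂ p₃ p₄ : ℤ} (h₁₂ : p₂ ≤ p₁) (h₂₃ : p₃ ≤ p₂)
    (h₃₄ : p₄ ≤ p₃) (hne : p₁ + p₄ ≠ p₂ + p₃) : Irreducible (ofMultiset {p₁, p₂, p₃, p₄}) :=
  irreducible_ofMultiset_of_card_eq_four rfl (quadruple_ne_pairSumset h₁₂ h₂₃ h₃₄ hne)

/-- Among the five smallest elements `e₀ < ⋯ < e₄` of `S`, the sum `e₀ + e₄` cannot equal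
both `e₁ + e₂` and `e₁ + e₃`. -/
lemma Finset.exists_quadruple_add_ne_of_five_le_card {S : Finset ℤ} (hS : 5 ≤ S.card) :
    ∃ p₁ ∈ S, ∃ p₂ ∈ S, ∃ p₃ ∈ S, ∃ p₄ ∈ S,
      p₂ < p₁ ∧ p₃ < p₂ ∧ p₄ < p₃ ∧ p₁ + p₄ ≠ p₂ + p₃ := by
  set e := S.orderEmbOfFin rfl
  have hmem : ∀ i, e i ∈ S := S.orderEmbOfFin_mem rfl
  have h01 : e ⟨0, by omega⟩ < e ⟨1, by omega⟩ := e.strictMono (by simp [Fin.lt_def])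
  have h12 : e ⟨1, by omega⟩ < e ⟨2, by omega⟩ := e.strictMono (by simp [Fin.lt_def])
  have h23 : e ⟨2, by omega⟩ < e ⟨3, by omega⟩ := e.strictMono (by simp [Fin.lt_def])
  have h34 : e ⟨3, by omega⟩ < e ⟨4, by omega⟩ := e.strictMono (by simp [Fin.lt_def])
  by_cases h : e ⟨4, by omega⟩ + e ⟨0, by omega⟩ = e ⟨2, by omega⟩ + e ⟨1, by omega⟩
  · exact ⟨_, hmem _, _, hmem _, _, hmem _, _, hmem _, h34, by omega, h01, by omega⟩
  · exact ⟨_, hmem _, _, hmem _, _, hmem _, _, hmem _, by omega, h12, h01, h⟩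

lemma Multiset.exists_quadruple_add_ne_le {M : Multiset ℤ} (h₂ : 2 ≤ M.toFinset.card)
    (h₉ : 9 ≤ Multiset.card M) :
    ∃ p₁ p₂ p₃ p₄ : ℤ, p₂ ≤ p₁ ∧ p₃ ≤ p₂ ∧ p₄ ≤ p₃ ∧ p₁ + p₄ ≠ p₂ + p₃ ∧
      {p₁, p₂, p₃, p₄} ≤ M := by
  by_cases hcount : ∃ p, 3 ≤ M.count p
  · obtain ⟨p, hp⟩ := hcount
    obtain ⟨q, hqM, hqp⟩ := M.toFinset.exists_mem_ne h₂ p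
    have hq : 1 ≤ M.count q := Multiset.one_le_count_iff_mem.mpr (Multiset.mem_toFinset.mp hqM)
    have hle : ({p, p, p, q} : Multiset ℤ) ≤ M := by
      refine Multiset.le_iff_count.mpr fun x => ?_
      simp only [Multiset.insert_eq_cons, Multiset.count_cons, Multiset.count_singleton]
      split_ifs <;> subst_vars <;> omega
    rcases lt_or_gt_of_ne hqp with hlt | hgt
    · exact ⟨p, p, p, q, le_rfl, le_rfl, hlt.le, by omega, hle⟩
    · refine ⟨q, p, p, p, hgt.le, le_rfl, le_rfl, by omega, ?_⟩
      simpa only [Multiset.insert_eq_cons, ← Multiset.cons_zero, Multiset.cons_swap q] using hle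
  · push Not at hcount
    have hS : 5 ≤ M.toFinset.card := by
      have : Multiset.card M ≤ 2 * M.toFinset.card := by
        rw [← Multiset.toFinset_sum_count_eq, mul_comm, ← smul_eq_mul, ← Finset.sum_const]
        exact Finset.sum_le_sum fun x _ => by have := hcount x; omega
      omega
    obtain ⟨p₁, h₁, p₂, h₂, p₃, h₃, p₄, h₄, h₁₂, h₂₃, h₃₄, hne⟩ :=
      Finset.exists_quadruple_add_ne_of_five_le_card hS
    refine ⟨p₁, p₂, p₃, p₄, h₁₂.le, h₂₃.le, h₃₄.le, hne, ?_⟩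
    refine (Multiset.le_iff_subset (by
      simp only [Multiset.insert_eq_cons, Multiset.nodup_cons, Multiset.mem_cons,
        Multiset.mem_singleton, Multiset.nodup_singleton, not_or, and_true]
      omega)).mpr fun x hx => ?_
    simp only [Multiset.insert_eq_cons, Multiset.mem_cons, Multiset.mem_singleton] at hx
    simp only [Multiset.mem_toFinset] at h₁ h₂ h₃ h₄
    rcases hx with rfl | rfl | rfl | rfl <;> assumption

theorem exists_irreducible_add_irreducible {f : NL} (hsupp : 2 ≤ f.coeff.support.card)
    (h₉ : 9 ≤ evalOne f) (hprime : (evalOne f - 4).Prime) :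
    ∃ g h : NL, Irreducible g ∧ Irreducible h ∧ f = g + h := by
  obtain ⟨M, rfl⟩ := ofMultiset.surjective f
  rw [coeff_ofMultiset, Multiset.toFinsupp_support] at hsupp
  rw [evalOne_ofMultiset] at h₉ hprime
  obtain ⟨p₁, p₂, p₃, p₄, h₁₂, h₂₃, h₃₄, hne, hle⟩ := Multiset.exists_quadruple_add_ne_le hsupp h₉
  refine ⟨_, ofMultiset (M - {p₁, p₂, p₃, p₄}), irreducible_ofMultiset_quadruple h₁₂ h₂₃ h₃₄ hne,
    irreducible_of_prime_evalOne ?_, ?_⟩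
  · rwa [evalOne_ofMultiset, Multiset.card_sub hle]
  · rw [← map_add, add_tsub_cancel_of_le hle]

/-- If `|supp f| ≥ 3` and `f(1) ∈ {11, 17, 23, 27}`, then `f` is a sum of two irreducibles. -/
theorem stmt17 (f : NL) (hsupp : 3 ≤ f.coeff.support.card)
    (hval : evalOne f ∈ ({11, 17, 23, 27} : Finset ℕ)) :
    ∃ g h : NL, Irreducible g ∧ Irreducible h ∧ f = g + h := by
  simp only [Finset.mem_insert, Finset.mem_singleton] at hval
  refine exists_irreducible_add_irreducible (by omega) (by omega) ?_
  rcases hval with h | h | h | h <;> rw [h] <;> norm_num
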